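/- arXiv:2508.19343 — 2 statements merged into one kernel-verified Lean document; each statement's English description precedes it below -/
import Mathlib

section
/- Let U be the cyclic shift operator on ℂ^{2Λ} with Λ a power of 2, and A = (−iΛ/E_max) log U. Then A admits the exact diagonalization A = (π/E_max)( (2Λ−1)/2 · I − Σ_{i=0}^{log(2Λ)−1} F (2^{i−1} Z_{i+1}) F† ), where F is the discrete Fourier transform on ℂ^{2Λ} and Z_{i+1} is the Pauli-Z operator on the (i+1)-th qubit of the log(2Λ)-qubit register. -/
namespace FieldDiag

open Matrix

noncomputable section

/-- The discrete Fourier transform on `ℂ^{2Λ}` (unitary, diagonalizing the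
cyclic shift `U` with eigenvalues `e^{2πik/(2Λ)}`). -/
def Fm (Λ : ℕ) : Matrix (Fin (2 * Λ)) (Fin (2 * Λ)) ℂ := fun a b =>
  Complex.exp (-2 * Real.pi * Complex.I * (a : ℕ) * (b : ℕ) / (2 * Λ)) /
    Real.sqrt (2 * Λ)

/-- The cyclic raising operator `U = Σ_ε |ε+1 mod 2Λ⟩⟨ε|`. -/
def U (Λ : ℕ) : Matrix (Fin (2 * Λ)) (Fin (2 * Λ)) ℂ := fun a b =>
  if (a : ℕ) = ((b : ℕ) + 1) % (2 * Λ) then 1 else 0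

/-- The principal-branch logarithm of `U`, defined spectrally: on the Fourier
eigenbasis it multiplies by `2πik/(2Λ)`, `k ∈ [0, 2Λ)`. -/
def logU (Λ : ℕ) : Matrix (Fin (2 * Λ)) (Fin (2 * Λ)) ℂ :=
  Fm Λ * Matrix.diagonal (fun k : Fin (2 * Λ) =>
    2 * Real.pi * Complex.I * (k : ℕ) / (2 * Λ)) * (Fm Λ)ᴴ

/-- The discretized vector potential `A = (-iΛ/E_max) log U`. -/
def Amat (Λ : ℕ) (Emax : ℝ) : Matrix (Fin (2 * Λ)) (Fin (2 * Λ)) ℂ :=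
  ((-Complex.I * (Λ : ℂ)) / (Emax : ℂ)) • logU Λ

/-- The Pauli-`Z` operator on qubit `i` of the `log(2Λ)`-qubit register,
acting diagonally as `(-1)^{bit_i(k)}` in the computational basis. -/
def Zbit (Λ : ℕ) (i : ℕ) : Matrix (Fin (2 * Λ)) (Fin (2 * Λ)) ℂ :=
  Matrix.diagonal (fun k : Fin (2 * Λ) =>
    if Nat.testBit (k : ℕ) i then (-1 : ℂ) else 1)


lemma bitsum (n k : ℕ) :
    ∑ i ∈ Finset.range n, 2 ^ i * (Nat.testBit k i).toNat = k % 2 ^ n := by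
  induction n with
  | zero => simp [Nat.mod_one]
  | succ n ih =>
    rw [Finset.sum_range_succ, ih, Nat.mod_pow_succ, Nat.testBit_eq_decide_div_mod_eq]
    rcases Nat.mod_two_eq_zero_or_one (k / 2^n) with h | h <;> simp [h]


lemma bitsumC (n k : ℕ) (hk : k < 2 ^ n) :
    ∑ i ∈ Finset.range n, (2:ℂ) ^ i * (if Nat.testBit k i then (-1:ℂ) else 1)
      = ((2:ℂ) ^ n - 1) - 2 * k := by
  have hite : ∀ i, (if Nat.testBit k i then (-1:ℂ) else 1)
      = 1 - 2 * ((Nat.testBit k i).toNat : ℂ) := by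
    intro i; cases Nat.testBit k i <;> norm_num
  simp_rw [hite, mul_sub, mul_one, Finset.sum_sub_distrib]
  have h1 : ∑ i ∈ Finset.range n, (2:ℂ) ^ i = 2 ^ n - 1 := by
    rw [geom_sum_eq (by norm_num)]
    norm_num
  have h2 : ∑ i ∈ Finset.range n, (2:ℂ) ^ i * (2 * ((Nat.testBit k i).toNat : ℂ))
      = 2 * (k:ℂ) := by
    have := bitsum n k
    rw [Nat.mod_eq_of_lt hk] at this
    calc ∑ i ∈ Finset.range n, (2:ℂ) ^ i * (2 * ((Nat.testBit k i).toNat : ℂ))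
        = 2 * ∑ i ∈ Finset.range n, ((2 ^ i * (Nat.testBit k i).toNat : ℕ) : ℂ) := by
          rw [Finset.mul_sum]; congr 1; ext i; push_cast; ring
      _ = 2 * (k:ℂ) := by rw [← Nat.cast_sum, this]
  rw [h1, h2]

lemma star_Fm (Λ : ℕ) (x y : Fin (2*Λ)) : star (Fm Λ x y)
    = Complex.exp (2 * Real.pi * Complex.I * ((x:ℕ):ℂ) * ((y:ℕ):ℂ) / (2 * Λ)) / Real.sqrt (2 * Λ) := by
  simp only [Fm, Complex.star_def, map_div₀, ← Complex.exp_conj]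
  congr 2
  · simp only [map_div₀, _root_.map_mul, map_neg, map_ofNat, Complex.conj_I,
      Complex.conj_ofReal, map_natCast]
    ring
  · exact Complex.conj_ofReal _


lemma Fm_unitary (Λ : ℕ) (hΛ : 0 < Λ) : Fm Λ * (Fm Λ)ᴴ = 1 := by
  have hN : (0:ℝ) < 2 * (Λ:ℝ) := by positivity
  have hΛC : (Λ:ℂ) ≠ 0 := by exact_mod_cast hΛ.ne'
  have hNC : (2 * (Λ:ℂ)) ≠ 0 := by simp [hΛC]
  have hpi : (Real.pi : ℂ) ≠ 0 := by exact_mod_cast Real.pi_ne_zero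
  have h2 : (2:ℂ) * Real.pi * Complex.I ≠ 0 := by
    simp [hpi, Complex.I_ne_zero]
  ext a b
  rw [Matrix.mul_apply, Matrix.one_apply]
  have hterm : ∀ c : Fin (2*Λ), Fm Λ a c * (Fm Λ)ᴴ c b =
      (Complex.exp (2 * Real.pi * Complex.I * (((b:ℕ):ℂ) - ((a:ℕ):ℂ)) / (2 * Λ))) ^ (c:ℕ)
        / (2 * (Λ:ℂ)) := by
    intro c
    rw [Matrix.conjTranspose_apply, star_Fm]
    simp only [Fm]
    rw [div_mul_div_comm, ← Complex.exp_add]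
    have hsq : ((Real.sqrt (2*Λ) : ℂ)) * (Real.sqrt (2*Λ) : ℂ) = (2 * (Λ:ℂ)) := by
      rw [← Complex.ofReal_mul, Real.mul_self_sqrt (by positivity)]
      push_cast; ring
    rw [hsq, ← Complex.exp_nat_mul]
    congr 1
    rw [← add_div, ← mul_div_assoc]
    congr 1
    ring
  rw [Finset.sum_congr rfl (fun c _ => hterm c), ← Finset.sum_div,
    Fin.sum_univ_eq_sum_range (fun c => _ ^ c)]
  by_cases hab : a = b
  · subst hab
    simp only [sub_self, mul_zero, zero_div, Complex.exp_zero, one_pow, if_pos rfl]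
    rw [Finset.sum_const, Finset.card_range]
    push_cast
    field_simp
    simp [nsmul_eq_mul]
  · have hw1 : Complex.exp (2 * Real.pi * Complex.I * (((b:ℕ):ℂ) - ((a:ℕ):ℂ)) / (2 * Λ)) ≠ 1 := by
      intro h
      rw [Complex.exp_eq_one_iff] at h
      obtain ⟨m, hm⟩ := h
      rw [div_eq_iff hNC] at hm
      have hmc : ((b:ℕ):ℂ) - ((a:ℕ):ℂ) = (m : ℂ) * (2 * Λ) :=
        mul_left_cancel₀ h2 (by linear_combination hm)
      have hz : ((b:ℕ):ℤ) - ((a:ℕ):ℤ) = m * (2 * (Λ:ℤ)) := by exact_mod_cast hmc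
      have hdvd : ((2*Λ:ℕ):ℤ) ∣ ((b:ℕ):ℤ) - ((a:ℕ):ℤ) := ⟨m, by push_cast; linarith⟩
      have habs : |((b:ℕ):ℤ) - ((a:ℕ):ℤ)| < ((2*Λ:ℕ):ℤ) := by
        have := a.isLt; have := b.isLt
        rw [abs_lt]
        constructor <;> omega
      have h0 := Int.eq_zero_of_abs_lt_dvd hdvd habs
      exact hab (Fin.ext (by omega))
    have hwN : (Complex.exp (2 * Real.pi * Complex.I * (((b:ℕ):ℂ) - ((a:ℕ):ℂ)) / (2 * Λ))) ^ (2*Λ) = 1 := by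
      rw [← Complex.exp_nat_mul]
      have : ((2*Λ:ℕ):ℂ) * (2 * Real.pi * Complex.I * (((b:ℕ):ℂ) - ((a:ℕ):ℂ)) / (2 * Λ))
          = (((b:ℕ):ℤ) - ((a:ℕ):ℤ) : ℤ) * (2 * Real.pi * Complex.I) := by
        push_cast
        field_simp
      rw [this, Complex.exp_int_mul_two_pi_mul_I]
    rw [geom_sum_eq hw1, hwN]
    simp [hab]

/-- **Exact Fourier diagonalization of the vector potential** (Corollary 1 of
MSW23): for `Λ = 2^ℓ` a power of two,
`A = (π/E_max)((2Λ-1)/2 · I - Σ_{i=0}^{log(2Λ)-1} F (2^{i-1} Z_{i+1}) F†)`. -/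
theorem vector_potential_diagonalization (ℓ : ℕ) (Emax : ℝ) (hE : 0 < Emax) :
    Amat (2 ^ ℓ) Emax =
      ((Real.pi : ℂ) / (Emax : ℂ)) •
        ((((2 * (2 ^ ℓ : ℕ) - 1 : ℕ) : ℂ) / 2) • (1 : Matrix (Fin (2 * 2 ^ ℓ)) (Fin (2 * 2 ^ ℓ)) ℂ) -
          ∑ i ∈ Finset.range (ℓ + 1),
            Fm (2 ^ ℓ) * (((2 : ℂ) ^ i / 2) • Zbit (2 ^ ℓ) i) * (Fm (2 ^ ℓ))ᴴ) := by
  have hF := Fm_unitary (2 ^ ℓ) (by positivity)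
  have hEC : (Emax : ℂ) ≠ 0 := by exact_mod_cast hE.ne'
  set c : ℂ := (((2 * (2 ^ ℓ : ℕ) - 1 : ℕ) : ℂ) / 2) with hc
  set S : Matrix (Fin (2 * 2 ^ ℓ)) (Fin (2 * 2 ^ ℓ)) ℂ :=
    ∑ i ∈ Finset.range (ℓ + 1), ((2 : ℂ) ^ i / 2) • Zbit (2 ^ ℓ) i with hS
  have hsum : ∑ i ∈ Finset.range (ℓ + 1),
      Fm (2 ^ ℓ) * (((2 : ℂ) ^ i / 2) • Zbit (2 ^ ℓ) i) * (Fm (2 ^ ℓ))ᴴ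
      = Fm (2 ^ ℓ) * S * (Fm (2 ^ ℓ))ᴴ := by
    rw [hS, ← Finset.sum_mul, ← Finset.mul_sum]
  have hone : c • (1 : Matrix (Fin (2 * 2 ^ ℓ)) (Fin (2 * 2 ^ ℓ)) ℂ)
      = Fm (2 ^ ℓ) * (c • 1) * (Fm (2 ^ ℓ))ᴴ := by
    rw [mul_smul_comm, smul_mul_assoc, Matrix.mul_one, hF]
  have hinner : ((-Complex.I * ((2 ^ ℓ : ℕ) : ℂ)) / (Emax : ℂ)) •
        Matrix.diagonal (fun k : Fin (2 * 2 ^ ℓ) =>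
          2 * Real.pi * Complex.I * (k : ℕ) / (2 * ((2 ^ ℓ : ℕ):ℂ)))
      = ((Real.pi : ℂ) / (Emax : ℂ)) • (c • 1 - S) := by
    ext j k
    rcases eq_or_ne j k with rfl | hjk
    · simp only [Matrix.smul_apply, Matrix.sub_apply, Matrix.one_apply_eq,
        Matrix.diagonal_apply_eq, hS, hc, Matrix.sum_apply, Zbit, smul_eq_mul]
      have hj : (j : ℕ) < 2 ^ (ℓ + 1) := by
        have := j.isLt; omega
      have hkey : ∑ x ∈ Finset.range (ℓ + 1), (2:ℂ) ^ x / 2 *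
            (if Nat.testBit (j:ℕ) x then (-1:ℂ) else 1)
          = ((2:ℂ) ^ (ℓ+1) - 1 - 2 * ((j:ℕ):ℂ)) / 2 := by
        simp_rw [div_mul_eq_mul_div, ← Finset.sum_div, bitsumC _ _ hj]
      rw [hkey]
      have hcast : ((2 * 2 ^ ℓ - 1 : ℕ) : ℂ) = (2:ℂ) ^ (ℓ+1) - 1 := by
        have : (2 * 2 ^ ℓ - 1 : ℕ) + 1 = 2 ^ (ℓ+1) := by
          have : 0 < 2 ^ ℓ := by positivity
          omega
        have h2 := congrArg (fun n : ℕ => (n : ℂ)) this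
        push_cast at h2
        linear_combination h2
      rw [hcast]
      have h2 : ((2:ℂ) ^ ℓ) ≠ 0 := pow_ne_zero _ two_ne_zero
      field_simp
      ring_nf
      linear_combination (-2 * ((j:ℕ):ℂ)) * Complex.I_sq
    · simp [Matrix.diagonal_apply_ne _ hjk, hS, Zbit, Matrix.sum_apply,
        Matrix.one_apply_ne hjk]
  calc Amat (2 ^ ℓ) Emax
      = Fm (2 ^ ℓ) * (((-Complex.I * ((2 ^ ℓ : ℕ) : ℂ)) / (Emax : ℂ)) •
          Matrix.diagonal (fun k : Fin (2 * 2 ^ ℓ) =>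
            2 * Real.pi * Complex.I * (k : ℕ) / (2 * ((2 ^ ℓ : ℕ):ℂ)))) * (Fm (2 ^ ℓ))ᴴ := by
        unfold Amat logU
        rw [mul_smul_comm, smul_mul_assoc]
    _ = Fm (2 ^ ℓ) * (((Real.pi : ℂ) / (Emax : ℂ)) • (c • 1 - S)) * (Fm (2 ^ ℓ))ᴴ := by
        rw [hinner]
    _ = ((Real.pi : ℂ) / (Emax : ℂ)) • (Fm (2 ^ ℓ) * (c • 1 - S) * (Fm (2 ^ ℓ))ᴴ) := by
        rw [mul_smul_comm, smul_mul_assoc]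
    _ = ((Real.pi : ℂ) / (Emax : ℂ)) •
          (Fm (2 ^ ℓ) * (c • 1) * (Fm (2 ^ ℓ))ᴴ - Fm (2 ^ ℓ) * S * (Fm (2 ^ ℓ))ᴴ) := by
        rw [Matrix.mul_sub, Matrix.sub_mul]
    _ = ((Real.pi : ℂ) / (Emax : ℂ)) • (c • 1 - ∑ i ∈ Finset.range (ℓ + 1),
          Fm (2 ^ ℓ) * (((2 : ℂ) ^ i / 2) • Zbit (2 ^ ℓ) i) * (Fm (2 ^ ℓ))ᴴ) := by
        rw [← hone, ← hsum]

end

end FieldDiag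
end

section
/- For the (2a+1)-point centered finite-difference coefficients d'_{2a+1,k} = (−1)^{k+1}(a!)²/(k(a−k)!(a+k)!) for k ≠ 0 and d'_{2a+1,0} = 0, the coefficient 1-norm satisfies Σ_{k=−a}^{a} |d'_{2a+1,k}| ≤ 2 Σ_{k=1}^{a} 1/k ≤ 2(1 + ln a), and hence Σ_k |d'_{2a+1,k}| ∈ O(log a). -/
/-- The `(2a+1)`-point centered finite-difference coefficients
`d'_{2a+1,k} = (-1)^{k+1}(a!)²/(k(a-k)!(a+k)!)` for `k ≠ 0`, `d'_{2a+1,0} = 0`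
(using `(a-k)!(a+k)! = (a-|k|)!(a+|k|)!`). -/
noncomputable def dcoef (a : ℕ) (k : ℤ) : ℝ :=
  if k = 0 then 0
  else ((-1 : ℝ) ^ (k + 1) * (Nat.factorial a : ℝ) ^ 2) /
    ((k : ℝ) * (Nat.factorial (a - k.natAbs) : ℝ) * (Nat.factorial (a + k.natAbs) : ℝ))

lemma fact_sq_le (a : ℕ) : ∀ n ≤ a, (a.factorial)^2 ≤ (a-n).factorial * (a+n).factorial := by
  intro n hn
  induction n with
  | zero => simp [pow_two]
  | succ m ih =>
    have hm : m ≤ a := by omega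
    refine (ih hm).trans ?_
    have h1 : a - m = (a - (m+1)) + 1 := by omega
    have h2 : a + (m+1) = (a + m) + 1 := by omega
    rw [h1, h2, Nat.factorial_succ, Nat.factorial_succ]
    have : a - (m+1) + 1 ≤ a + m + 1 := by omega
    calc (a - (m+1) + 1) * (a-(m+1)).factorial * (a+m).factorial
        ≤ (a + m + 1) * (a-(m+1)).factorial * (a+m).factorial :=
          Nat.mul_le_mul_right _ (Nat.mul_le_mul_right _ this)
      _ = (a-(m+1)).factorial * ((a + m + 1) * (a+m).factorial) := by ring

lemma dcoef_abs_le (a : ℕ) (k : ℤ) (hk : k ≠ 0) (hka : k.natAbs ≤ a) :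
    |dcoef a k| ≤ (k.natAbs : ℝ)⁻¹ := by
  have hk0 : (k : ℝ) ≠ 0 := Int.cast_ne_zero.mpr hk
  have habs : |(k:ℝ)| = (k.natAbs : ℝ) := by rw [Nat.cast_natAbs, Int.cast_abs]
  have hnpos : (0:ℝ) < (k.natAbs : ℝ) := by
    have : 0 < k.natAbs := Int.natAbs_pos.mpr hk
    exact_mod_cast this
  have hf1 : (0:ℝ) < (Nat.factorial (a - k.natAbs) : ℝ) := by
    exact_mod_cast Nat.factorial_pos _
  have hf2 : (0:ℝ) < (Nat.factorial (a + k.natAbs) : ℝ) := by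
    exact_mod_cast Nat.factorial_pos _
  have hsign : |(-1:ℝ) ^ (k+1)| = 1 := by
    rcases Int.even_or_odd (k+1) with h | h
    · rw [h.neg_one_zpow]; simp
    · rw [h.neg_one_zpow]; simp
  rw [dcoef, if_neg hk, abs_div, abs_mul, hsign, one_mul,
    abs_mul, abs_mul, habs, abs_of_pos hf1, abs_of_pos hf2, abs_pow, abs_of_nonneg
    (by positivity : (0:ℝ) ≤ (Nat.factorial a : ℝ))]
  rw [div_le_iff₀ (by positivity), inv_mul_eq_div, le_div_iff₀ hnpos]
  have key : ((a.factorial)^2 : ℝ) ≤ (Nat.factorial (a - k.natAbs) : ℝ) * (Nat.factorial (a + k.natAbs) : ℝ) := by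
    exact_mod_cast fact_sq_le a k.natAbs hka
  nlinarith

lemma gsum (a : ℕ) :
    (∑ k ∈ Finset.Icc (-(a : ℤ)) (a : ℤ),
        (if k = 0 then (0:ℝ) else (k.natAbs : ℝ)⁻¹)) =
      2 * ∑ k ∈ Finset.Icc 1 a, (1 : ℝ) / k := by
  induction a with
  | zero => simp
  | succ n ih =>
    have h1 : Finset.Icc (-((n+1 : ℕ) : ℤ)) ((n+1 : ℕ) : ℤ) =
        insert (-((n+1 : ℕ) : ℤ)) (insert ((n+1 : ℕ) : ℤ) (Finset.Icc (-(n : ℤ)) (n : ℤ))) := by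
      ext x
      simp only [Finset.mem_Icc, Finset.mem_insert]
      push_cast
      omega
    have h2 : ((n+1 : ℕ) : ℤ) ∉ insert ((n+1 : ℕ) : ℤ) (Finset.Icc (-(n : ℤ)) (n : ℤ)) → True := fun _ => trivial
    rw [h1, Finset.sum_insert (by simp only [Finset.mem_insert, Finset.mem_Icc]; push_cast; omega), Finset.sum_insert (by simp only [Finset.mem_Icc]; push_cast; omega), ih]
    have h3 : Finset.Icc 1 (n+1) = insert (n+1) (Finset.Icc 1 n) := by
      ext x; simp [Finset.mem_Icc]; omega
    rw [h3, Finset.sum_insert (by simp)]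
    rw [if_neg (by intro h; omega), if_neg (by intro h; omega)]
    have e1 : (-((n+1:ℕ):ℤ)).natAbs = n+1 := by omega
    have e2 : (((n+1:ℕ):ℤ)).natAbs = n+1 := by omega
    rw [e1, e2]
    push_cast
    ring

/-- **Coefficient 1-norm of the centered finite-difference formula**:
`Σ_{k=-a}^{a} |d'_{2a+1,k}| ≤ 2 Σ_{k=1}^{a} 1/k ≤ 2(1 + ln a)`, hence
the 1-norm is `O(log a)`. -/
theorem finite_difference_coefficient_norm (a : ℕ) (ha : 1 ≤ a) :
    (∑ k ∈ Finset.Icc (-(a : ℤ)) (a : ℤ), |dcoef a k|) ≤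
        2 * ∑ k ∈ Finset.Icc 1 a, (1 : ℝ) / k ∧
    2 * (∑ k ∈ Finset.Icc 1 a, (1 : ℝ) / k) ≤ 2 * (1 + Real.log a) := by
  constructor
  · rw [← gsum a]
    refine Finset.sum_le_sum fun k hk => ?_
    by_cases h : k = 0
    · simp [h, dcoef]
    · rw [if_neg h]
      refine dcoef_abs_le a k h ?_
      simp only [Finset.mem_Icc] at hk
      omega
  · have h := harmonic_le_one_add_log a
    have hs : (harmonic a : ℝ) = ∑ k ∈ Finset.Icc 1 a, (1 : ℝ) / k := by
      rw [harmonic_eq_sum_Icc]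
      push_cast
      simp [one_div]
    rw [← hs]
    linarith
end
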